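/- Let n, s ∈ ℤ with s ≥ 1 and 4s ≤ n + 1. Then the two sets W(n+1,s) and {2v_{n,s} − v : v ∈ W(n+1,s)} are disjoint, the set of extreme points of the polytope P(n,s) is exactly S(n,s) = W(n+1,s) ∪ {2v_{n,s} − v : v ∈ W(n+1,s)}, and P(n,s) has exactly 2·binom(n+1, s) vertices. Moreover P(n,s) is centrally symmetric with center v_{n,s}: for every vertex v of P(n,s), the point 2v_{n,s} − v is also a vertex. -/

import Mathlib

/-!
All points of `S(n,s)` lie on one ellipsoid around `v_{n,s}`, a level set of the strictly convex
function `x ↦ q_{n,s}(x - v_{n,s})`: for a `0/1`-vector `w`, each summand of `q_{n,s}(w - v_{n,s})`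
is `w_i` plus the corresponding summand of `q_{n,s}(v_{n,s})`, so the value is `s + q_{n,s}(v_{n,s})`,
and the reflection `x ↦ 2v_{n,s} - x` preserves the function. By strict convexity no point of that
level set lies strictly inside a segment of the sublevel set, which contains `conv S(n,s)`; hence
every point of `S(n,s)` is extreme. The two halves of `S(n,s)` are separated by the first
coordinate, which is `0` or `1` on one side and `±1/2` on the other.
-/

open Finset

noncomputable section

/-- The lattice `A_n = {x ∈ ℤ^{n+1} : Σ x_i = 0}`, viewed inside `ℝ^{n+1}`. -/
def latticeA (n : ℕ) : Set (Fin (n+1) → ℝ) :=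
  {x | (∀ i, ∃ m : ℤ, x i = m) ∧ ∑ i, x i = 0}

/-- The point lattice `V_{n,s} = {x ∈ ℤ^{n+1} : Σ x_i = s}`. -/
def Vset (n s : ℕ) : Set (Fin (n+1) → ℝ) :=
  {x | (∀ i, ∃ m : ℤ, x i = m) ∧ ∑ i, x i = (s : ℝ)}

/-- The vertex set `W(n+1,s) = {x ∈ {0,1}^{n+1} : Σ x_i = s}`. -/
def Wset (n s : ℕ) : Set (Fin (n+1) → ℝ) :=
  {x | (∀ i, x i = 0 ∨ x i = 1) ∧ ∑ i, x i = (s : ℝ)}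

/-- The vector `v_{n,s} = ((1/4)^{4s}; 0^{n+1-4s})`. -/
def vns (n s : ℕ) : Fin (n+1) → ℝ := fun i => if (i : ℕ) < 4 * s then 1 / 4 else 0

/-- The vector `t_{n,s} = ((1/2)^{2s}; (−1/2)^{2s}; 0^{n+1-4s})`. -/
def tns (n s : ℕ) : Fin (n+1) → ℝ := fun i =>
  if (i : ℕ) < 2 * s then 1 / 2 else if (i : ℕ) < 4 * s then -(1 / 2) else 0

/-- The point lattice `V²_{n,s} = V_{n,s} ∪ (t_{n,s} + V_{n,s})`. -/
def V2 (n s : ℕ) : Set (Fin (n+1) → ℝ) :=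
  Vset n s ∪ (fun x => tns n s + x) '' Vset n s

/-- The vertex set `S(n,s) = W(n+1,s) ∪ {2v_{n,s} − v : v ∈ W(n+1,s)}`
of the polytope `P(n,s)`. -/
def Sns (n s : ℕ) : Set (Fin (n+1) → ℝ) :=
  Wset n s ∪ (fun v => (2 : ℝ) • vns n s - v) '' Wset n s

/-- The quadratic form `q_{n,s}(x) = 2 Σ_{i<4s} x_i² + Σ_{i≥4s} x_i²`. -/
def qns (n s : ℕ) (x : Fin (n+1) → ℝ) : ℝ :=
  ∑ i : Fin (n+1), (if (i : ℕ) < 4 * s then (2:ℝ) else 1) * (x i) ^ 2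

theorem extremePoints_convexHull_eq_of_strictConvexOn {E : Type*} [AddCommGroup E]
    [Module ℝ E] {f : E → ℝ} {S : Set E} {c : ℝ} (hf : StrictConvexOn ℝ Set.univ f)
    (hS : ∀ x ∈ S, f x = c) : Set.extremePoints ℝ (convexHull ℝ S) = S := by
  refine extremePoints_convexHull_subset.antisymm fun x hx => ?_
  have hle : convexHull ℝ S ⊆ {y ∈ Set.univ | f y ≤ c} :=
    convexHull_min (fun y hy => ⟨trivial, (hS y hy).le⟩) (hf.convexOn.convex_le c)
  refine mem_extremePoints.2 ⟨subset_convexHull ℝ S hx, fun y hy z hz hxyz => ?_⟩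
  obtain rfl | hyz := eq_or_ne y z
  · rw [openSegment_same, Set.mem_singleton_iff] at hxyz
    exact ⟨hxyz.symm, hxyz.symm⟩
  · have hlt := hf.lt_on_openSegment trivial trivial hyz hxyz
    rw [hS x hx] at hlt
    exact absurd hlt (not_lt.2 (max_le (hle hy).2 (hle hz).2))

theorem strictConvexOn_sum_mul_sub_sq {ι : Type*} [Fintype ι] {w : ι → ℝ} (hw : ∀ i, 0 < w i)
    (v : ι → ℝ) : StrictConvexOn ℝ Set.univ (fun x : ι → ℝ => ∑ i, w i * (x i - v i) ^ 2) := by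
  refine ⟨convex_univ, fun x _ y _ hxy a b ha hb hab => ?_⟩
  obtain ⟨j, hj⟩ := Function.ne_iff.1 hxy
  obtain rfl : b = 1 - a := by linarith
  simp only [Pi.add_apply, Pi.smul_apply, smul_eq_mul, Finset.mul_sum, ← Finset.sum_add_distrib]
  -- each summand has convexity defect `a (1 - a) w_i (x_i - y_i)²`
  refine Finset.sum_lt_sum (fun i _ => ?_) ⟨j, mem_univ j, ?_⟩
  · nlinarith [mul_nonneg (mul_nonneg ha.le hb.le) (mul_nonneg (hw i).le (sq_nonneg (x i - y i)))]
  · nlinarith [mul_pos (mul_pos ha hb) (mul_pos (hw j) (sq_pos_of_ne_zero (sub_ne_zero.2 hj)))]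

theorem strictConvexOn_qns_sub_vns (n s : ℕ) :
    StrictConvexOn ℝ Set.univ (fun x => qns n s (x - vns n s)) :=
  strictConvexOn_sum_mul_sub_sq (fun i => by split_ifs <;> norm_num) (vns n s)

theorem qns_sub_vns_of_mem_Wset {n s : ℕ} {w : Fin (n + 1) → ℝ} (hw : w ∈ Wset n s) :
    qns n s (w - vns n s) = s + qns n s (vns n s) := by
  rw [← hw.2, qns, qns, ← sum_add_distrib]
  refine sum_congr rfl fun i _ => ?_
  rcases hw.1 i with h | h <;> simp only [Pi.sub_apply, vns, h] <;> split_ifs <;> norm_num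

theorem qns_sub_vns_of_mem_Sns {n s : ℕ} {x : Fin (n + 1) → ℝ} (hx : x ∈ Sns n s) :
    qns n s (x - vns n s) = s + qns n s (vns n s) := by
  rcases hx with hx | ⟨w, hw, rfl⟩
  · exact qns_sub_vns_of_mem_Wset hx
  · rw [← qns_sub_vns_of_mem_Wset hw, qns, qns]
    refine sum_congr rfl fun i _ => ?_
    simp only [Pi.sub_apply, Pi.smul_apply, smul_eq_mul]
    ring

theorem reflect_mem_Sns {n s : ℕ} {x : Fin (n + 1) → ℝ} (hx : x ∈ Sns n s) :
    (2 : ℝ) • vns n s - x ∈ Sns n s := by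
  rcases hx with hx | ⟨w, hw, rfl⟩
  · exact Or.inr ⟨x, hx, rfl⟩
  · exact Or.inl ((sub_sub_cancel _ w).symm ▸ hw)

theorem disjoint_Wset_reflect {n s : ℕ} (hs : 1 ≤ s) :
    Disjoint (Wset n s) ((fun v => (2 : ℝ) • vns n s - v) '' Wset n s) := by
  rw [Set.disjoint_left]
  rintro _ hx ⟨w, hw, rfl⟩
  have hv : vns n s 0 = 1 / 4 := if_pos (by simp; omega)
  have hx0 := hx.1 0
  simp only [Pi.sub_apply, Pi.smul_apply, smul_eq_mul, hv] at hx0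
  rcases hw.1 0 with h | h <;> rw [h] at hx0 <;> norm_num at hx0

theorem Wset_eq_image (n s : ℕ) :
    Wset n s = (fun A : Finset (Fin (n + 1)) => fun i => if i ∈ A then (1 : ℝ) else 0) ''
      (powersetCard s univ : Finset (Finset (Fin (n + 1)))) := by
  ext x
  simp only [Set.mem_image, mem_coe, mem_powersetCard_univ]
  constructor
  · intro hx
    have hind : (fun i => if i ∈ univ.filter (x · = 1) then (1 : ℝ) else 0) = x := by
      funext i
      rcases hx.1 i with h | h <;> simp [h]
    refine ⟨univ.filter (x · = 1), ?_, hind⟩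
    have hsum := hx.2
    rw [← hind] at hsum
    simpa using hsum
  · rintro ⟨A, hA, rfl⟩
    refine ⟨fun i => ?_, ?_⟩
    · by_cases h : i ∈ A <;> simp [h]
    · simp [hA]

theorem indicator_injective (α : Type*) [DecidableEq α] :
    Function.Injective fun A : Finset α => fun i => if i ∈ A then (1 : ℝ) else 0 := by
  intro A B h
  ext i
  have := congrFun h i
  by_cases hA : i ∈ A <;> by_cases hB : i ∈ B <;> simp [hA, hB] at this ⊢

theorem Wset_finite (n s : ℕ) : (Wset n s).Finite := by
  rw [Wset_eq_image]
  exact (finite_toSet _).image _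

theorem Wset_ncard (n s : ℕ) : (Wset n s).ncard = (n + 1).choose s := by
  rw [Wset_eq_image, Set.ncard_image_of_injective _ (indicator_injective _),
    Set.ncard_coe_finset, card_powersetCard, card_univ, Fintype.card_fin]

theorem Pns_vertices (n s : ℕ) (hs : 1 ≤ s) :
    Disjoint (Wset n s) ((fun v => (2 : ℝ) • vns n s - v) '' Wset n s) ∧
    Set.extremePoints ℝ (convexHull ℝ (Sns n s)) = Sns n s ∧
    (Sns n s).ncard = 2 * (n + 1).choose s ∧
    (∀ v ∈ Set.extremePoints ℝ (convexHull ℝ (Sns n s)),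
      (2 : ℝ) • vns n s - v ∈ Set.extremePoints ℝ (convexHull ℝ (Sns n s))) := by
  have hdisj := disjoint_Wset_reflect (n := n) hs
  have hext : Set.extremePoints ℝ (convexHull ℝ (Sns n s)) = Sns n s :=
    extremePoints_convexHull_eq_of_strictConvexOn (strictConvexOn_qns_sub_vns n s)
      fun _ => qns_sub_vns_of_mem_Sns
  refine ⟨hdisj, hext, ?_, fun v hv => ?_⟩
  · rw [Sns, Set.ncard_union_eq hdisj (Wset_finite n s) ((Wset_finite n s).image _),
      Set.ncard_image_of_injective _ sub_right_injective, Wset_ncard, two_mul]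
  · rw [hext] at hv ⊢
    exact reflect_mem_Sns hv
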